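/- Let M be a W*-bundle over a compact Hausdorff space K with conditional expectation E: M → C(K). Suppose X ⊆ T(M) is a weak*-closed convex set of traces with ‖a‖_{2,X} = ‖a‖_{2,K} for all a ∈ M, and suppose the C*-norm satisfies ‖a‖ ≤ 2^{1/2}‖a‖_{2,K} for all a ∈ M. If there exists a tracial state σ ∈ T(M) \ X, then X is not a face of T(M). -/

import Mathlib

open Filter

/-- The set of tracial states on a unital C*-algebra, viewed inside the weak* dual. -/
def tracialStates (A : Type*) [NormedRing A] [StarRing A] [NormedAlgebra ℂ A] :
    Set (WeakDual ℂ A) :=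
  {φ | φ 1 = 1 ∧ (∀ a : A, 0 ≤ (φ (star a * a)).re ∧ (φ (star a * a)).im = 0) ∧
    ∀ a b : A, φ (a * b) = φ (b * a)}

/-- The 2-seminorm `‖a‖_{2,X} = sup_{τ ∈ X} τ(a*a)^{1/2}` associated to a set of traces. -/
noncomputable def norm2 {A : Type*} [NormedRing A] [StarRing A] [NormedAlgebra ℂ A]
    (X : Set (WeakDual ℂ A)) (a : A) : ℝ :=
  sSup ((fun φ : WeakDual ℂ A => Real.sqrt (φ (star a * a)).re) '' X)

variable {K : Type*} [TopologicalSpace K] [CompactSpace K] [T2Space K]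
variable {M : Type*} [NormedRing M] [StarRing M] [CStarRing M] [NormedAlgebra ℂ M]
  [CompleteSpace M] [StarModule ℂ M]

/-- The uniform 2-norm `‖a‖_{2,K} = ‖E(a*a)‖^{1/2}` of a W*-bundle. -/
noncomputable def bundleNorm2 (E : M →L[ℂ] C(K, ℂ)) (a : M) : ℝ :=
  Real.sqrt ‖E (star a * a)‖

/-- `M` is a W*-bundle over `K` with central unital embedding `ι : C(K) → M` and faithful
tracial conditional expectation `E : M → C(K)`, whose C*-unit ball is complete for the
2-norm `‖a‖_{2,K} = ‖E(a*a)‖^{1/2}`. -/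
structure IsWStarBundle (ι : C(K, ℂ) →⋆ₐ[ℂ] M) (E : M →L[ℂ] C(K, ℂ)) : Prop where
  central : ∀ (f : C(K, ℂ)) (a : M), ι f * a = a * ι f
  tracial : ∀ a b : M, E (a * b) = E (b * a)
  expectation : ∀ f : C(K, ℂ), E (ι f) = f
  bimodule : ∀ (f : C(K, ℂ)) (a : M), E (ι f * a) = f * E a
  pos : ∀ (a : M) (x : K), 0 ≤ (E (star a * a) x).re ∧ (E (star a * a) x).im = 0
  faithful : ∀ a : M, E (star a * a) = 0 → a = 0
  complete : ∀ u : ℕ → M, (∀ n, ‖u n‖ ≤ 1) →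
    (∀ ε > 0, ∃ N, ∀ m ≥ N, ∀ n ≥ N, bundleNorm2 E (u m - u n) < ε) →
    ∃ a : M, ‖a‖ ≤ 1 ∧ Tendsto (fun n => bundleNorm2 E (u n - a)) atTop (nhds 0)

/-! If some `τ ∈ X` satisfies `σ ≤ 2τ` on positive elements, then `τ` is the midpoint of `σ` and
the trace `2τ - σ`, so a face containing `τ` contains `σ`. Otherwise every `τ ∈ X` has a positive
element on which `2τ < σ`; compactness of `X` and a finite-dimensional Hahn–Banach separation merge
these into a single `a = b*b` with `2 sup_{τ ∈ X} τ(a) < σ(a)`. This contradicts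
`σ(a) ≤ ‖a‖ = ‖b‖² ≤ 2‖b‖²_{2,X} = 2 sup_{τ ∈ X} τ(a)`. -/

theorem exists_nonneg_sum_mul_lt_neg_of_disjoint_Ici {ι : Type*} [Fintype ι] {D : Set (ι → ℝ)}
    (hDc : IsCompact D) (hDconv : Convex ℝ D) (hD : Disjoint D (Set.Ici 0)) :
    ∃ w : ι → ℝ, 0 ≤ w ∧ ∃ u < 0, ∀ y ∈ D, ∑ i, w i * y i < u := by
  classical
  obtain ⟨f, u, v, hfD, huv, hfQ⟩ :=
    geometric_hahn_banach_compact_closed hDconv hDc (convex_Ici 0) isClosed_Ici hD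
  have hv : v < 0 := by simpa using hfQ 0 Set.self_mem_Ici
  set w : ι → ℝ := fun i => f (Pi.single i 1)
  have hw : 0 ≤ w := by
    intro i
    by_contra! hneg
    have hmem : (v / w i) • (Pi.single i 1 : ι → ℝ) ∈ Set.Ici 0 := Set.mem_Ici.2 <|
      smul_nonneg (div_nonneg_of_nonpos hv.le hneg.le) (Pi.single_nonneg.2 zero_le_one)
    have := hfQ _ hmem
    rw [map_smul, smul_eq_mul, div_mul_cancel₀ v hneg.ne] at this
    exact this.false
  refine ⟨w, hw, u, huv.trans hv, fun y hy => ?_⟩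
  have hfy : f y = ∑ i, w i * y i := by
    conv_lhs => rw [← Finset.univ_sum_single y]
    simp only [map_sum, w]
    refine Finset.sum_congr rfl fun i _ => ?_
    rw [mul_comm, ← smul_eq_mul, ← map_smul, ← Pi.single_smul', smul_eq_mul, mul_one]
  exact hfy ▸ hfD y hy

theorem IsCompact.exists_finset_nonneg_sum_mul_lt_neg {E J : Type*} [AddCommGroup E] [Module ℝ E]
    [TopologicalSpace E] {X : Set E} (hXc : IsCompact X) (hXconv : Convex ℝ X) (F : J → E → ℝ)
    (hF : ∀ j, Continuous (F j))
    (hFaff : ∀ j x y (p q : ℝ), p + q = 1 → F j (p • x + q • y) = p * F j x + q * F j y)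
    (h : ∀ x ∈ X, ∃ j, F j x < 0) :
    ∃ t : Finset J, ∃ w : t → ℝ, 0 ≤ w ∧ ∃ u < 0, ∀ x ∈ X, ∑ i, w i * F i x < u := by
  obtain ⟨t, ht⟩ := hXc.elim_finite_subcover (fun j => {x | F j x < 0})
    (fun j => isOpen_lt (hF j) continuous_const) fun x hx => Set.mem_iUnion.2 (h x hx)
  let g : E → (t → ℝ) := fun x i => F i x
  have hD : Disjoint (g '' X) (Set.Ici 0) := by
    refine Set.disjoint_left.2 ?_
    rintro _ ⟨x, hx, rfl⟩ hnonneg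
    obtain ⟨j, hjt, hj⟩ := Set.mem_iUnion₂.1 (ht hx)
    exact (hnonneg ⟨j, hjt⟩).not_gt hj
  have hDconv : Convex ℝ (g '' X) := by
    rintro _ ⟨x, hx, rfl⟩ _ ⟨y, hy, rfl⟩ p q hp hq hpq
    exact ⟨p • x + q • y, hXconv hx hy hp hq hpq, funext fun i => hFaff i x y p q hpq⟩
  obtain ⟨w, hw, u, hu, hwg⟩ := exists_nonneg_sum_mul_lt_neg_of_disjoint_Ici (D := g '' X)
    (hXc.image (continuous_pi fun i => hF i)) hDconv hD
  exact ⟨t, w, hw, u, hu, fun x hx => hwg (g x) ⟨x, hx, rfl⟩⟩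

section TracialStates

variable {A : Type*}

section Algebra

variable [NormedRing A] [StarRing A] [NormedAlgebra ℂ A]

theorem nonempty_of_norm_le_mul_norm2 {X : Set (WeakDual ℂ A)} {C : ℝ}
    (hX : ∀ a : A, ‖a‖ ≤ C * norm2 X a) {σ : WeakDual ℂ A} (hσ : σ ∈ tracialStates A) :
    X.Nonempty := by
  rw [Set.nonempty_iff_ne_empty]
  rintro rfl
  have hone : (1 : A) = 0 := norm_le_zero_iff.1 (by simpa [norm2] using hX 1)
  simpa [hone] using hσ.1

theorem smul_sub_mem_tracialStates {σ τ : WeakDual ℂ A} (hσ : σ ∈ tracialStates A)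
    (hτ : τ ∈ tracialStates A) {c : ℝ} (hc : 1 < c)
    (hle : ∀ s : A, (σ (star s * s)).re ≤ c * (τ (star s * s)).re) :
    (c - 1)⁻¹ • (c • τ - σ) ∈ tracialStates A := by
  have happ : ∀ x : A, ((c - 1)⁻¹ • (c • τ - σ)) x = (c - 1)⁻¹ • (c • τ x - σ x) :=
    fun _ => rfl
  refine ⟨?_, fun s => ?_, fun a b => ?_⟩
  · have : (c : ℂ) - 1 ≠ 0 := by exact_mod_cast (sub_pos.2 hc).ne'
    rw [happ, hσ.1, hτ.1, Complex.real_smul, Complex.real_smul]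
    push_cast
    field_simp
  · obtain ⟨hσre, hσim⟩ := hσ.2.1 s
    obtain ⟨hτre, hτim⟩ := hτ.2.1 s
    simp only [happ, Complex.smul_re, Complex.smul_im, Complex.sub_re, Complex.sub_im,
      hσim, hτim, smul_eq_mul, mul_zero, sub_zero]
    exact ⟨mul_nonneg (inv_pos.2 (sub_pos.2 hc)).le (by linarith [hle s]), trivial⟩
  · rw [happ, happ, hσ.2.2, hτ.2.2]

theorem IsExtreme.mem_of_re_apply_le_mul {X : Set (WeakDual ℂ A)}
    (hX : IsExtreme ℝ (tracialStates A) X) {σ τ : WeakDual ℂ A} (hσ : σ ∈ tracialStates A)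
    (hτ : τ ∈ X) {c : ℝ} (hc : 1 < c)
    (hle : ∀ s : A, (σ (star s * s)).re ≤ c * (τ (star s * s)).re) : σ ∈ X := by
  have hc0 : 0 < c := one_pos.trans hc
  refine hX.left_mem_of_mem_openSegment hσ (smul_sub_mem_tracialStates hσ (hX.1 hτ) hc hle) hτ
    ⟨c⁻¹, 1 - c⁻¹, inv_pos.2 hc0, sub_pos.2 (inv_lt_one_of_one_lt₀ hc), by ring, ?_⟩
  refine DFunLike.ext _ _ fun x => ?_
  change c⁻¹ • σ x + (1 - c⁻¹) • (c - 1)⁻¹ • (c • τ x - σ x) = τ x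
  have : c - 1 ≠ 0 := (sub_pos.2 hc).ne'
  rw [smul_smul, show (1 - c⁻¹) * (c - 1)⁻¹ = c⁻¹ by field_simp, smul_sub, smul_smul,
    inv_mul_cancel₀ hc0.ne', one_smul, add_sub_cancel]

end Algebra

section CStarAlgebra

variable [CStarAlgebra A]

open ComplexOrder in
theorem nonneg_apply_of_mem_tracialStates [PartialOrder A] [StarOrderedRing A]
    {φ : WeakDual ℂ A} (hφ : φ ∈ tracialStates A) {x : A} (hx : 0 ≤ x) : 0 ≤ φ x := by
  obtain ⟨b, rfl⟩ := CStarAlgebra.nonneg_iff_eq_star_mul_self.1 hx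
  exact Complex.nonneg_iff.2 ⟨(hφ.2.1 b).1, (hφ.2.1 b).2.symm⟩

open ComplexOrder in
theorem norm_apply_le_of_mem_tracialStates_of_nonneg [PartialOrder A] [StarOrderedRing A]
    {φ : WeakDual ℂ A} (hφ : φ ∈ tracialStates A) {x : A} (hx : 0 ≤ x) : ‖φ x‖ ≤ ‖x‖ := by
  have h := (PositiveLinearMap.mk₀ (φ : A →L[ℂ] ℂ).toLinearMap
    fun _ => nonneg_apply_of_mem_tracialStates hφ).norm_apply_le_of_nonneg x hx
  change ‖φ x‖ ≤ ‖φ 1‖ * ‖x‖ at h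
  simpa [hφ.1] using h

theorem norm_apply_le_four_mul_of_mem_tracialStates {φ : WeakDual ℂ A}
    (hφ : φ ∈ tracialStates A) (a : A) : ‖φ a‖ ≤ 4 * ‖a‖ := by
  let _ := CStarAlgebra.spectralOrder A
  let _ := CStarAlgebra.spectralOrderedRing A
  obtain ⟨x, hx0, hxa, ha⟩ := CStarAlgebra.exists_sum_four_nonneg a
  calc ‖φ a‖ = ‖∑ i : Fin 4, Complex.I ^ (i : ℕ) • φ (x i)‖ := by
        rw [ha, map_sum]; simp only [map_smul]
    _ ≤ ∑ i : Fin 4, ‖x i‖ := norm_sum_le_of_le _ fun i _ => by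
        simpa using norm_apply_le_of_mem_tracialStates_of_nonneg hφ (hx0 i)
    _ ≤ ∑ _i : Fin 4, ‖a‖ := Finset.sum_le_sum fun i _ => hxa i
    _ = 4 * ‖a‖ := by simp

theorem IsClosed.isCompact_of_subset_tracialStates {X : Set (WeakDual ℂ A)} (hXc : IsClosed X)
    (hXsub : X ⊆ tracialStates A) : IsCompact X :=
  (WeakDual.isCompact_closedBall 0 4).of_isClosed_subset hXc fun _ hτ =>
    mem_closedBall_zero_iff.2 <| ContinuousLinearMap.opNorm_le_bound _ (by norm_num)
      (norm_apply_le_four_mul_of_mem_tracialStates (hXsub hτ))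

theorem re_apply_star_mul_self_le_sq_mul {X : Set (WeakDual ℂ A)} (hXsub : X ⊆ tracialStates A)
    (hXne : X.Nonempty) {C : ℝ} (hX : ∀ a : A, ‖a‖ ≤ C * norm2 X a) {σ : WeakDual ℂ A}
    (hσ : σ ∈ tracialStates A) (b : A) {w : ℝ}
    (hw : ∀ τ ∈ X, (τ (star b * b)).re ≤ w) : (σ (star b * b)).re ≤ C ^ 2 * w := by
  let _ := CStarAlgebra.spectralOrder A
  let _ := CStarAlgebra.spectralOrderedRing A
  obtain ⟨τ₀, hτ₀⟩ := hXne
  have hw0 : 0 ≤ w := ((hXsub hτ₀).2.1 b).1.trans (hw τ₀ hτ₀)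
  have hnorm2_nonneg : 0 ≤ norm2 X b := Real.sSup_nonneg fun _ ⟨_, _, h⟩ => h ▸ Real.sqrt_nonneg _
  have hnorm2_le : norm2 X b ≤ √w :=
    csSup_le ⟨_, τ₀, hτ₀, rfl⟩ fun _ ⟨τ, hτ, h⟩ => h ▸ Real.sqrt_le_sqrt (hw τ hτ)
  calc (σ (star b * b)).re ≤ ‖σ (star b * b)‖ := Complex.re_le_norm _
    _ ≤ ‖star b * b‖ := norm_apply_le_of_mem_tracialStates_of_nonneg hσ (star_mul_self_nonneg b)
    _ = ‖b‖ ^ 2 := by rw [CStarRing.norm_star_mul_self, sq]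
    _ ≤ (C * norm2 X b) ^ 2 := pow_le_pow_left₀ (norm_nonneg b) (hX b) 2
    _ = C ^ 2 * norm2 X b ^ 2 := mul_pow _ _ _
    _ ≤ C ^ 2 * w := by
        gcongr
        exact (Real.le_sqrt hnorm2_nonneg hw0).1 hnorm2_le

theorem exists_star_mul_self_mul_re_add_le {X : Set (WeakDual ℂ A)} (hXc : IsCompact X)
    (hXconv : Convex ℝ X) (σ : WeakDual ℂ A) (c : ℝ)
    (h : ∀ τ ∈ X, ∃ s : A, c * (τ (star s * s)).re < (σ (star s * s)).re) :
    ∃ b : A, ∃ ε > 0, ∀ τ ∈ X, c * (τ (star b * b)).re + ε ≤ (σ (star b * b)).re := by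
  let F : A → WeakDual ℂ A → ℝ := fun s τ => c * (τ (star s * s)).re - (σ (star s * s)).re
  have hF : ∀ s, Continuous (F s) := fun s =>
    (continuous_const.mul (Complex.continuous_re.comp (WeakDual.eval_continuous _))).sub
      continuous_const
  have hFaff : ∀ s (τ τ' : WeakDual ℂ A) (p q : ℝ), p + q = 1 →
      F s (p • τ + q • τ') = p * F s τ + q * F s τ' := fun s τ τ' p q hpq => by
    change c * (p • τ (star s * s) + q • τ' (star s * s)).re - _ = _
    simp only [F, Complex.add_re, Complex.smul_re, smul_eq_mul]
    linear_combination (σ (star s * s)).re * hpq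
  obtain ⟨t, w, hw, u, hu, hwF⟩ := hXc.exists_finset_nonneg_sum_mul_lt_neg hXconv F hF hFaff
    fun τ hτ => (h τ hτ).imp fun _ => sub_neg.2
  let a : A := ∑ i : t, w i • (star (i : A) * i)
  have hre : ∀ φ : WeakDual ℂ A, (φ a).re = ∑ i : t, w i * (φ (star (i : A) * i)).re := fun φ => by
    simp only [a, map_sum, Complex.re_sum]
    refine Finset.sum_congr rfl fun i _ => ?_
    exact congrArg Complex.re ((φ : A →L[ℂ] ℂ).map_smul_of_tower (w i) _) |>.trans
      (Complex.smul_re _ _)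
  let _ := CStarAlgebra.spectralOrder A
  let _ := CStarAlgebra.spectralOrderedRing A
  obtain ⟨b, hb⟩ := CStarAlgebra.nonneg_iff_eq_star_mul_self.1 <|
    Finset.sum_nonneg fun i _ => smul_nonneg (show 0 ≤ w i from hw i) (star_mul_self_nonneg (i : A))
  refine ⟨b, -u, neg_pos.2 hu, fun τ hτ => ?_⟩
  have hFa : c * (τ a).re - (σ a).re = ∑ i : t, w i * F i τ := by
    simp only [hre, F, Finset.mul_sum, ← Finset.sum_sub_distrib]
    exact Finset.sum_congr rfl fun i _ => by ring
  have := hwF τ hτ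
  rw [← hb]
  linarith

end CStarAlgebra

end TracialStates

theorem not_face_of_missing_trace_general (E : M →L[ℂ] C(K, ℂ))
    (X : Set (WeakDual ℂ M)) (hXsub : X ⊆ tracialStates M)
    (hXclosed : IsClosed X) (hXconv : Convex ℝ X)
    (hXnorm : ∀ a : M, norm2 X a = bundleNorm2 E a)
    (hnorm : ∀ a : M, ‖a‖ ≤ Real.sqrt 2 * bundleNorm2 E a)
    (σ : WeakDual ℂ M) (hσ : σ ∈ tracialStates M \ X) :
    ¬ IsExtreme ℝ (tracialStates M) X := by
  let _ : CStarAlgebra M := {}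
  intro hface
  have hX : ∀ a : M, ‖a‖ ≤ √2 * norm2 X a := fun a => hXnorm a ▸ hnorm a
  by_cases hdom : ∃ τ ∈ X, ∀ s : M, (σ (star s * s)).re ≤ 2 * (τ (star s * s)).re
  · obtain ⟨τ, hτ, hle⟩ := hdom
    exact hσ.2 (hface.mem_of_re_apply_le_mul hσ.1 hτ one_lt_two hle)
  push Not at hdom
  obtain ⟨b, ε, hε, hb⟩ := exists_star_mul_self_mul_re_add_le
    (hXclosed.isCompact_of_subset_tracialStates hXsub) hXconv σ 2 hdom
  have hσb := re_apply_star_mul_self_le_sq_mul hXsub (nonempty_of_norm_le_mul_norm2 hX hσ.1) hX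
    hσ.1 b (w := ((σ (star b * b)).re - ε) / 2) fun τ hτ => by linarith [hb τ hτ]
  rw [Real.sq_sqrt zero_le_two] at hσb
  linarith

/-- Let `M` be a W*-bundle over `K`, and let `X ⊆ T(M)` be a weak*-closed convex set of
traces inducing the bundle 2-norm.  If the C*-norm satisfies `‖a‖ ≤ √2·‖a‖_{2,K}` and
there is a trace `σ ∈ T(M) \ X`, then `X` is not a face of `T(M)`. -/
theorem not_face_of_missing_trace (ι : C(K, ℂ) →⋆ₐ[ℂ] M) (E : M →L[ℂ] C(K, ℂ))
    (hbundle : IsWStarBundle ι E)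
    (X : Set (WeakDual ℂ M)) (hXsub : X ⊆ tracialStates M)
    (hXclosed : IsClosed X) (hXconv : Convex ℝ X)
    (hXnorm : ∀ a : M, norm2 X a = bundleNorm2 E a)
    (hnorm : ∀ a : M, ‖a‖ ≤ Real.sqrt 2 * bundleNorm2 E a)
    (σ : WeakDual ℂ M) (hσ : σ ∈ tracialStates M \ X) :
    ¬ IsExtreme ℝ (tracialStates M) X :=
  not_face_of_missing_trace_general E X hXsub hXclosed hXconv hXnorm hnorm σ hσ
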